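/- Let Ω ⊆ ℝⁿ be a finite union of closed convex polyhedra P₁, …, P_m and x₀ ∈ Ω. Then the contingent cone satisfies T_Ω(x₀) = ⋃_{k : x₀ ∈ P_k} cone(P_k − x₀), where each cone(P_k − x₀) is closed. -/

import Mathlib

/-!
A tangent sequence `x₀ + tⱼ cⱼ` in a finite union has a subsequence inside a single piece, so the
contingent cone of the union is the union of the contingent cones of the pieces; a closed piece
not containing `x₀` contributes nothing. For a polyhedron `P = {x | ⟪aᵢ, x⟫ ≤ bᵢ}` containing
`x₀`, both its contingent cone and `cone (P - x₀)` equal the closed cone cut out by the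
constraints active at `x₀`: a tangent direction satisfies them in the limit, and conversely a
short step from `x₀` along such a direction keeps the inactive constraints strict.
-/

/-- The contingent (tangent) cone to `Ω` at `x₀`. -/
def contingentCone {n : ℕ} (Ω : Set (EuclideanSpace ℝ (Fin n)))
    (x₀ : EuclideanSpace ℝ (Fin n)) : Set (EuclideanSpace ℝ (Fin n)) :=
  {w | ∃ t : ℕ → ℝ, ∃ c : ℕ → EuclideanSpace ℝ (Fin n),
    (∀ k, 0 < t k) ∧ Filter.Tendsto t Filter.atTop (nhds 0) ∧
    Filter.Tendsto c Filter.atTop (nhds w) ∧ ∀ k, x₀ + t k • c k ∈ Ω}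

/-- A set is a (closed convex) polyhedron if it is a finite intersection of
closed half-spaces. -/
def IsPolyhedron {n : ℕ} (P : Set (EuclideanSpace ℝ (Fin n))) : Prop :=
  ∃ (k : ℕ) (a : Fin k → EuclideanSpace ℝ (Fin n)) (b : Fin k → ℝ),
    P = {x | ∀ i, @inner ℝ _ _ (a i) x ≤ b i}

open Set Filter Topology
open scoped RealInnerProductSpace

def radialCone {E : Type*} [AddCommGroup E] [Module ℝ E] (S : Set E) (x₀ : E) : Set E :=
  {w | ∃ lam : ℝ, 0 ≤ lam ∧ ∃ p ∈ S, w = lam • (p - x₀)}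

section HalfSpaces

variable {E : Type*} [NormedAddCommGroup E] [InnerProductSpace ℝ E] {ι : Type*}
  (a : ι → E) (b : ι → ℝ)

def halfSpaces : Set E := {x | ∀ i, ⟪a i, x⟫ ≤ b i}

def activeCone (x₀ : E) : Set E := {w | ∀ i, ⟪a i, x₀⟫ = b i → ⟪a i, w⟫ ≤ 0}

theorem isClosed_halfSpaces : IsClosed (halfSpaces a b) := by
  simp only [halfSpaces, ofPred_forall]
  exact isClosed_iInter fun i => isClosed_le (continuous_const.inner continuous_id) continuous_const

theorem convex_halfSpaces : Convex ℝ (halfSpaces a b) := by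
  simp only [halfSpaces, ofPred_forall]
  exact convex_iInter fun i => convex_halfSpace_le (innerₛₗ ℝ (a i)).isLinear (b i)

theorem isClosed_activeCone (x₀ : E) : IsClosed (activeCone a b x₀) := by
  simp only [activeCone, ofPred_forall]
  exact isClosed_iInter fun i => isClosed_iInter fun _ =>
    isClosed_le (continuous_const.inner continuous_id) continuous_const

theorem radialCone_halfSpaces [Finite ι] {x₀ : E} (hx₀ : x₀ ∈ halfSpaces a b) :
    radialCone (halfSpaces a b) x₀ = activeCone a b x₀ := by
  ext w
  constructor
  · rintro ⟨lam, hlam, p, hp, rfl⟩ i hi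
    rw [real_inner_smul_right, inner_sub_right, hi]
    exact mul_nonpos_of_nonneg_of_nonpos hlam (sub_nonpos.2 (hp i))
  · intro hw
    have hstep : ∀ i, ∀ᶠ t in 𝓝[>] (0 : ℝ), ⟪a i, x₀⟫ + t * ⟪a i, w⟫ ≤ b i := by
      intro i
      rcases (hx₀ i).eq_or_lt with hi | hi
      · filter_upwards [self_mem_nhdsWithin] with t ht
        rw [hi, add_le_iff_nonpos_right]
        exact mul_nonpos_of_nonneg_of_nonpos (le_of_lt ht) (hw i hi)
      · have hcont : Tendsto (fun t : ℝ => ⟪a i, x₀⟫ + t * ⟪a i, w⟫) (𝓝 0) (𝓝 ⟪a i, x₀⟫) := by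
          simpa using (Continuous.tendsto (by fun_prop) 0 :
            Tendsto (fun t : ℝ => ⟪a i, x₀⟫ + t * ⟪a i, w⟫) (𝓝 0) _)
        exact ((hcont.eventually_lt_const hi).mono fun _ => le_of_lt).filter_mono
          nhdsWithin_le_nhds
    obtain ⟨t, ht, htpos⟩ := ((eventually_all.2 hstep).and self_mem_nhdsWithin).exists
    refine ⟨t⁻¹, inv_nonneg.2 (le_of_lt htpos), x₀ + t • w, fun i => ?_, ?_⟩
    · rw [inner_add_right, real_inner_smul_right]
      exact ht i
    · rw [add_sub_cancel_left, smul_smul, inv_mul_cancel₀ (ne_of_gt htpos), one_smul]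

end HalfSpaces

section ContingentCone

variable {n : ℕ} {x₀ : EuclideanSpace ℝ (Fin n)}

theorem contingentCone_mono {S T : Set (EuclideanSpace ℝ (Fin n))} (hST : S ⊆ T) :
    contingentCone S x₀ ⊆ contingentCone T x₀ := by
  rintro w ⟨t, c, ht, ht0, hc, hmem⟩
  exact ⟨t, c, ht, ht0, hc, fun k => hST (hmem k)⟩

theorem contingentCone_iUnion {ι : Type*} [Finite ι] (S : ι → Set (EuclideanSpace ℝ (Fin n))) :
    contingentCone (⋃ k, S k) x₀ = ⋃ k, contingentCone (S k) x₀ := by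
  refine subset_antisymm ?_ (iUnion_subset fun k => contingentCone_mono (subset_iUnion S k))
  rintro w ⟨t, c, ht, ht0, hc, hmem⟩
  have hfreq : ∃ᶠ j in atTop, ∃ k, x₀ + t j • c j ∈ S k :=
    Frequently.of_forall fun j => mem_iUnion.1 (hmem j)
  obtain ⟨k, hk⟩ := frequently_exists.1 hfreq
  obtain ⟨φ, hφ, hφk⟩ := extraction_of_frequently_atTop hk
  exact mem_iUnion.2
    ⟨k, t ∘ φ, c ∘ φ, fun j => ht _, ht0.comp hφ.tendsto_atTop, hc.comp hφ.tendsto_atTop, hφk⟩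

theorem IsClosed.mem_of_mem_contingentCone {S : Set (EuclideanSpace ℝ (Fin n))} (hS : IsClosed S)
    {w : EuclideanSpace ℝ (Fin n)} (hw : w ∈ contingentCone S x₀) : x₀ ∈ S := by
  obtain ⟨t, c, -, ht0, hc, hmem⟩ := hw
  have hlim : Tendsto (fun j => x₀ + t j • c j) atTop (𝓝 (x₀ + (0 : ℝ) • w)) :=
    tendsto_const_nhds.add (ht0.smul hc)
  rw [zero_smul, add_zero] at hlim
  exact hS.mem_of_tendsto hlim (Eventually.of_forall hmem)

theorem Convex.radialCone_subset_contingentCone {S : Set (EuclideanSpace ℝ (Fin n))}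
    (hS : Convex ℝ S) (hx₀ : x₀ ∈ S) : radialCone S x₀ ⊆ contingentCone S x₀ := by
  rintro _ ⟨lam, hlam, p, hp, rfl⟩
  refine ⟨fun j => ((lam + 1) * (j + 1))⁻¹, fun _ => lam • (p - x₀), fun j => by positivity,
    ?_, tendsto_const_nhds, fun j => ?_⟩
  · exact tendsto_inv_atTop_zero.comp
      ((tendsto_natCast_atTop_atTop.atTop_add tendsto_const_nhds).const_mul_atTop (by positivity))
  · rw [smul_smul]
    refine hS.add_smul_sub_mem hx₀ hp ⟨by positivity, ?_⟩
    rw [inv_mul_le_iff₀ (by positivity)]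
    nlinarith [(Nat.cast_nonneg j : (0 : ℝ) ≤ j)]

theorem contingentCone_halfSpaces_subset_activeCone {ι : Type*}
    (a : ι → EuclideanSpace ℝ (Fin n)) (b : ι → ℝ) :
    contingentCone (halfSpaces a b) x₀ ⊆ activeCone a b x₀ := by
  rintro w ⟨t, c, ht, -, hc, hmem⟩ i hi
  refine le_of_tendsto' (((continuous_const.inner continuous_id).tendsto w).comp hc) fun k => ?_
  have hk := hmem k i
  rw [inner_add_right, real_inner_smul_right, hi, add_le_iff_nonpos_right] at hk
  exact nonpos_of_mul_nonpos_right hk (ht k)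

end ContingentCone

section Polyhedron

variable {n : ℕ} {P : Set (EuclideanSpace ℝ (Fin n))} {x₀ : EuclideanSpace ℝ (Fin n)}

theorem IsPolyhedron.mem_contingentCone_iff (hP : IsPolyhedron P) {w : EuclideanSpace ℝ (Fin n)} :
    w ∈ contingentCone P x₀ ↔ x₀ ∈ P ∧ w ∈ radialCone P x₀ := by
  obtain ⟨k, a, b, rfl⟩ : ∃ k, ∃ (a : Fin k → _) (b : Fin k → ℝ), P = halfSpaces a b := hP
  refine ⟨fun hw => ?_, fun ⟨hx₀, hw⟩ =>
    (convex_halfSpaces a b).radialCone_subset_contingentCone hx₀ hw⟩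
  have hx₀ := (isClosed_halfSpaces a b).mem_of_mem_contingentCone hw
  rw [radialCone_halfSpaces a b hx₀]
  exact ⟨hx₀, contingentCone_halfSpaces_subset_activeCone a b hw⟩

theorem IsPolyhedron.isClosed_radialCone (hP : IsPolyhedron P) (hx₀ : x₀ ∈ P) :
    IsClosed (radialCone P x₀) := by
  obtain ⟨k, a, b, rfl⟩ : ∃ k, ∃ (a : Fin k → _) (b : Fin k → ℝ), P = halfSpaces a b := hP
  rw [radialCone_halfSpaces a b hx₀]
  exact isClosed_activeCone a b x₀

end Polyhedron

theorem stmt17_general (n m : ℕ) (P : Fin m → Set (EuclideanSpace ℝ (Fin n)))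
    (hP : ∀ k, IsPolyhedron (P k))
    (x₀ : EuclideanSpace ℝ (Fin n)) :
    contingentCone (⋃ k, P k) x₀
      = {w | ∃ k, x₀ ∈ P k ∧ ∃ lam : ℝ, 0 ≤ lam ∧ ∃ p ∈ P k,
          w = lam • (p - x₀)} ∧
    ∀ k, x₀ ∈ P k →
      IsClosed {w : EuclideanSpace ℝ (Fin n) |
        ∃ lam : ℝ, 0 ≤ lam ∧ ∃ p ∈ P k, w = lam • (p - x₀)} := by
  refine ⟨?_, fun k hk => (hP k).isClosed_radialCone hk⟩
  ext w
  simp only [contingentCone_iUnion, mem_iUnion, (hP _).mem_contingentCone_iff]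
  rfl

theorem stmt17 (n m : ℕ) (P : Fin m → Set (EuclideanSpace ℝ (Fin n)))
    (hP : ∀ k, IsPolyhedron (P k))
    (x₀ : EuclideanSpace ℝ (Fin n)) (hx₀ : x₀ ∈ ⋃ k, P k) :
    contingentCone (⋃ k, P k) x₀
      = {w | ∃ k, x₀ ∈ P k ∧ ∃ lam : ℝ, 0 ≤ lam ∧ ∃ p ∈ P k,
          w = lam • (p - x₀)} ∧
    ∀ k, x₀ ∈ P k →
      IsClosed {w : EuclideanSpace ℝ (Fin n) |
        ∃ lam : ℝ, 0 ≤ lam ∧ ∃ p ∈ P k, w = lam • (p - x₀)} :=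
  stmt17_general n m P hP x₀
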